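/- In the nearest-common-ancestor labeling based on heavy-path decomposition, the nearest common ancestor of two nodes u and v can be determined from their labels alone: writing ℓ_u = ℓ·(a₀,a₁)·ℓ_u' and ℓ_v = ℓ·(b₀,b₁)·ℓ_v' where ℓ is the longest common prefix of whole pairs, the nearest common ancestor is the node with label ℓ·(a₀, min(a₁,b₁)) if a₀ = b₀, and otherwise (if ℓ is nonempty, ending in some pair (c₀,c₁)) the node whose label is ℓ. -/

import Mathlib

/-- A finite rooted tree given by parent pointers: the root is a fixed point of
`parent`, and iterating `parent` from any node eventually reaches the root. -/
structure ParentTree (V : Type*) where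
  root : V
  parent : V → V
  parent_root : parent root = root
  reaches_root : ∀ v, ∃ k, parent^[k] v = root

variable {V : Type*}

/-- The number of nodes in the subtree rooted at `v`. -/
noncomputable def ParentTree.size (t : ParentTree V) (v : V) : ℕ :=
  Set.ncard {u | ∃ k, t.parent^[k] u = v}

/-- The depth of a node: its distance to the root. -/
def ParentTree.depth [DecidableEq V] (t : ParentTree V) (v : V) : ℕ :=
  Nat.find (t.reaches_root v)

/-- `c` is a child of `u`. -/
def ParentTree.IsChild (t : ParentTree V) (c u : V) : Prop :=
  c ≠ u ∧ t.parent c = u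

/-- `heavy` designates, for every internal node `u`, exactly one child of `u`
whose subtree size is maximal among all children of `u`. -/
def HeavyValid (t : ParentTree V) (heavy : V → V) : Prop :=
  ∀ u, (∃ c, t.IsChild c u) →
    t.IsChild (heavy u) u ∧ ∀ c, t.IsChild c u → t.size c ≤ t.size (heavy u)

/-- Increment the distance component of the last pair of a label. -/
def incLast (l : List (ℕ × ℕ)) : List (ℕ × ℕ) :=
  l.dropLast ++ [(l.getLast!.1, l.getLast!.2 + 1)]

/-- `ℓ` is the nearest-common-ancestor labeling of the rooted tree `t` based on
the heavy-path decomposition given by `heavy`: the root is labeled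
`[(id root, 0)]`, a heavy child inherits its parent's label with the distance of
the last pair incremented by one, and a light child `v` gets its parent's label
with the pair `(id v, 0)` appended. -/
def IsNCALabeling (t : ParentTree V) (heavy : V → V) (idf : V → ℕ)
    (ℓ : V → List (ℕ × ℕ)) : Prop :=
  ℓ t.root = [(idf t.root, 0)] ∧
  ∀ v, v ≠ t.root →
    (heavy (t.parent v) = v → ℓ v = incLast (ℓ (t.parent v))) ∧
    (heavy (t.parent v) ≠ v → ℓ v = ℓ (t.parent v) ++ [(idf v, 0)])

/-- `a` is an ancestor of `v` (possibly `v` itself). -/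
def ParentTree.Anc (t : ParentTree V) (a v : V) : Prop :=
  ∃ k, t.parent^[k] v = a

/-- `a` is the nearest common ancestor of `u` and `v`: a common ancestor such
that every common ancestor of `u` and `v` is an ancestor of `a`. -/
def IsNca (t : ParentTree V) (a u v : V) : Prop :=
  t.Anc a u ∧ t.Anc a v ∧ ∀ b, t.Anc b u → t.Anc b v → t.Anc b a


/-!
Write `A ≼ B` (`LabelLE A B`) when `A = P ++ [(x, m)]` and `B = P ++ (x, m') :: R` with `m ≤ m'`. Walking up
from a node either decrements the last distance or drops a trailing `(id, 0)`, so the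
labels of the ancestors of `v` are exactly the labels `A ≼ ℓ v`, and since labels are injective,
`a` is an ancestor of `v` iff `ℓ a ≼ ℓ v`. The nearest common ancestor of `u` and `v` is therefore
the node labelled by the greatest common lower bound of `ℓ u` and `ℓ v` for `≼`, and a lower
bound of both `L ++ (a₀, a₁) :: lu` and `L ++ (b₀, b₁) :: lv` is either `≼ L` or of the form
`L ++ [(a₀, m)]` with `a₀ = b₀` and `m ≤ min a₁ b₁`.
-/

theorem List.append_cons_eq_append_cons {α : Type*} {P L r s : List α} {p q : α}
    (h : P ++ p :: r = L ++ q :: s) :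
    (∃ r', L = P ++ p :: r' ∧ r = r' ++ q :: s) ∨ (P = L ∧ p = q ∧ r = s) ∨
      (∃ s', P = L ++ q :: s' ∧ s = s' ++ p :: r) := by
  rcases List.append_eq_append_iff.mp h with
    ⟨_ | ⟨_, r'⟩, rfl, h'⟩ | ⟨_ | ⟨_, s'⟩, rfl, h'⟩
  · simp_all
  · simp only [List.cons_append, List.cons.injEq] at h'
    exact Or.inl ⟨r', by rw [h'.1], h'.2⟩
  · simp_all
  · simp only [List.cons_append, List.cons.injEq] at h'
    exact Or.inr (Or.inr ⟨s', by rw [h'.1], h'.2⟩)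

theorem ParentTree.induction (t : ParentTree V) {P : V → Prop} (root : P t.root)
    (parent : ∀ v, v ≠ t.root → P (t.parent v) → P v) (v : V) : P v := by
  obtain ⟨k, hk⟩ := t.reaches_root v
  induction k generalizing v with
  | zero => exact (Function.iterate_zero_apply _ _ ▸ hk) ▸ root
  | succ k ih =>
    by_cases hv : v = t.root
    · exact hv ▸ root
    · exact parent v hv (ih _ (by rwa [Function.iterate_succ_apply] at hk))

theorem ParentTree.Anc.of_parent {t : ParentTree V} {a v : V} (h : t.Anc a (t.parent v)) :
    t.Anc a v :=
  let ⟨k, hk⟩ := h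
  ⟨k + 1, by rwa [Function.iterate_succ_apply]⟩

/-- The order on labels that mirrors ancestry: the node labelled `A` lies on a heavy path that the
path from the root to the node labelled `B` follows at least as far down. -/
def LabelLE (A B : List (ℕ × ℕ)) : Prop :=
  ∃ (P : List (ℕ × ℕ)) (x m m' : ℕ) (R : List (ℕ × ℕ)),
    m ≤ m' ∧ A = P ++ [(x, m)] ∧ B = P ++ (x, m') :: R

namespace LabelLE

variable {A B C L Q : List (ℕ × ℕ)}

theorem not_nil : ¬ LabelLE A [] := by
  rintro ⟨P, x, m, m', R, -, -, h⟩
  simp at h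

theorem append_of_ne_nil (hA : A ≠ []) (M : List (ℕ × ℕ)) : LabelLE A (A ++ M) := by
  obtain ⟨P, ⟨x, m⟩, rfl⟩ := List.eq_nil_or_concat' A |>.resolve_left hA
  exact ⟨P, x, m, m, M, le_rfl, rfl, by simp⟩

theorem refl_of_ne_nil (hA : A ≠ []) : LabelLE A A := by
  simpa using append_of_ne_nil hA []

theorem append_right (h : LabelLE A B) (M : List (ℕ × ℕ)) : LabelLE A (B ++ M) := by
  obtain ⟨P, x, m, m', R, hm, rfl, rfl⟩ := h
  exact ⟨P, x, m, m', R ++ M, hm, rfl, by simp⟩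

theorem trans (hAB : LabelLE A B) (hBC : LabelLE B C) : LabelLE A C := by
  obtain ⟨P, x, m, m', R, hm, rfl, hB⟩ := hAB
  obtain ⟨Q, y, n, n', S, hn, hB', rfl⟩ := hBC
  rcases List.append_cons_eq_append_cons (hB ▸ hB')
    with ⟨r, rfl, -⟩ | ⟨rfl, hq, -⟩ | ⟨s, rfl, hs⟩
  · exact ⟨P, x, m, m', r ++ (y, n') :: S, hm, rfl, by simp⟩
  · obtain ⟨rfl, rfl⟩ := Prod.mk.inj hq
    exact ⟨_, _, _, _, S, hm.trans hn, rfl, rfl⟩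
  · simp at hs

theorem of_concat {y n : ℕ} (h : LabelLE A (Q ++ [(y, n)])) :
    LabelLE A Q ∨ ∃ m ≤ n, A = Q ++ [(y, m)] := by
  obtain ⟨P, x, m, m', R, hm, rfl, hQ⟩ := h
  rcases List.append_cons_eq_append_cons hQ.symm
    with ⟨r, rfl, -⟩ | ⟨rfl, hq, -⟩ | ⟨s, -, hs⟩
  · exact Or.inl ⟨_, _, _, _, r, hm, rfl, rfl⟩
  · obtain ⟨rfl, rfl⟩ := Prod.mk.inj hq
    exact Or.inr ⟨m, hm, rfl⟩
  · simp at hs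

theorem of_append_cons {p q : ℕ × ℕ} {r s : List (ℕ × ℕ)} (hr : LabelLE A (L ++ p :: r))
    (hs : LabelLE A (L ++ q :: s)) (hpq : p ≠ q) :
    LabelLE A L ∨ ∃ m, A = L ++ [(p.1, m)] ∧ p.1 = q.1 ∧ m ≤ p.2 ∧ m ≤ q.2 := by
  obtain ⟨P, x, m, m', R, hm, rfl, hP⟩ := hr
  obtain ⟨P', x', n, n', R', hn, hA, hP'⟩ := hs
  obtain ⟨rfl, hx⟩ : P' = P ∧ (x', n) = (x, m) := by simpa using hA.symm
  obtain ⟨rfl, rfl⟩ := Prod.mk.inj hx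
  rcases List.append_cons_eq_append_cons hP.symm
    with ⟨r', rfl, -⟩ | ⟨rfl, rfl, -⟩ | ⟨s', rfl, -⟩
  · exact Or.inl ⟨_, _, _, _, r', hm, rfl, rfl⟩
  · obtain ⟨rfl, -⟩ := (List.cons_eq_cons.mp (List.append_cancel_left hP'))
    exact Or.inr ⟨n, rfl, rfl, hm, hn⟩
  · simp only [List.append_assoc, List.cons_append] at hP'
    exact (hpq (List.cons_eq_cons.mp (List.append_cancel_left hP')).1.symm).elim

end LabelLE

namespace IsNCALabeling

variable {t : ParentTree V} {heavy : V → V} {idf : V → ℕ} {ℓ : V → List (ℕ × ℕ)}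

theorem ne_nil (hl : IsNCALabeling t heavy idf ℓ) (v : V) : ℓ v ≠ [] := by
  by_cases hv : v = t.root
  · simp [hv, hl.1]
  by_cases hh : heavy (t.parent v) = v
  · simp [(hl.2 v hv).1 hh, incLast]
  · simp [(hl.2 v hv).2 hh]

theorem heavy_or_light (hl : IsNCALabeling t heavy idf ℓ) {v : V} (hv : v ≠ t.root) :
    (heavy (t.parent v) = v ∧
      ∃ Q y n, ℓ (t.parent v) = Q ++ [(y, n)] ∧ ℓ v = Q ++ [(y, n + 1)]) ∨
    (heavy (t.parent v) ≠ v ∧ ℓ v = ℓ (t.parent v) ++ [(idf v, 0)]) := by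
  by_cases hh : heavy (t.parent v) = v
  · obtain ⟨Q, ⟨y, n⟩, hQ⟩ :=
      List.eq_nil_or_concat' _ |>.resolve_left (hl.ne_nil (t.parent v))
    refine Or.inl ⟨hh, Q, y, n, hQ, ?_⟩
    rw [(hl.2 v hv).1 hh, hQ, incLast, List.dropLast_concat,
      List.getLast!_of_getLast? List.getLast?_concat]
  · exact Or.inr ⟨hh, (hl.2 v hv).2 hh⟩

theorem labelLE_parent (hl : IsNCALabeling t heavy idf ℓ) (v : V) :
    LabelLE (ℓ (t.parent v)) (ℓ v) := by
  by_cases hv : v = t.root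
  · rw [hv, t.parent_root]
    exact LabelLE.refl_of_ne_nil (hl.ne_nil t.root)
  rcases hl.heavy_or_light hv with ⟨-, Q, y, n, hp, hv'⟩ | ⟨-, hv'⟩
  · exact ⟨Q, y, n, n + 1, [], n.le_succ, hp, hv'⟩
  · exact hv' ▸ LabelLE.append_of_ne_nil (hl.ne_nil _) _

theorem labelLE_of_anc (hl : IsNCALabeling t heavy idf ℓ) {a v : V} (h : t.Anc a v) :
    LabelLE (ℓ a) (ℓ v) := by
  obtain ⟨k, rfl⟩ := h
  induction k generalizing v with
  | zero => exact LabelLE.refl_of_ne_nil (hl.ne_nil v)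
  | succ k ih =>
    rw [Function.iterate_succ_apply]
    exact ih.trans (hl.labelLE_parent v)

theorem eq_or_labelLE_parent (hl : IsNCALabeling t heavy idf ℓ) {A : List (ℕ × ℕ)} {v : V}
    (hv : v ≠ t.root) (h : LabelLE A (ℓ v)) : A = ℓ v ∨ LabelLE A (ℓ (t.parent v)) := by
  rcases hl.heavy_or_light hv with ⟨-, Q, y, n, hp, hv'⟩ | ⟨-, hv'⟩ <;> rw [hv'] at h ⊢
  · rcases h.of_concat with hQ | ⟨m, hm, rfl⟩
    · exact Or.inr (hp ▸ hQ.append_right _)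
    rcases hm.eq_or_lt with rfl | hm
    · exact Or.inl rfl
    · exact Or.inr ⟨Q, y, m, n, [], Nat.le_of_lt_succ hm, rfl, hp⟩
  · rcases h.of_concat with hQ | ⟨m, hm, rfl⟩
    · exact Or.inr hQ
    · exact Or.inl (by rw [Nat.le_zero.mp hm])

theorem exists_anc_of_labelLE (hl : IsNCALabeling t heavy idf ℓ) {A : List (ℕ × ℕ)} {v : V}
    (h : LabelLE A (ℓ v)) :
    ∃ c, t.Anc c v ∧ ℓ c = A := by
  induction v using t.induction generalizing A with
  | root =>
    rw [hl.1, ← List.nil_append [_]] at h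
    rcases h.of_concat with h | ⟨m, hm, rfl⟩
    · exact absurd h LabelLE.not_nil
    · exact ⟨t.root, ⟨0, rfl⟩, by simp [hl.1, Nat.le_zero.mp hm]⟩
  | parent v hv ih =>
    rcases hl.eq_or_labelLE_parent hv h with rfl | h
    · exact ⟨v, ⟨0, rfl⟩, rfl⟩
    · obtain ⟨c, hc, rfl⟩ := ih h
      exact ⟨c, hc.of_parent, rfl⟩

theorem ne_label_root (hl : IsNCALabeling t heavy idf ℓ) {v : V} (hv : v ≠ t.root) :
    ℓ v ≠ ℓ t.root := by
  rw [hl.1]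
  rcases hl.heavy_or_light hv with ⟨-, Q, y, n, -, hv'⟩ | ⟨-, hv'⟩ <;> rw [hv'] <;> intro h
  · simpa using congrArg List.getLast? h
  · exact hl.ne_nil _ <| List.length_eq_zero_iff.mp (by simpa using congrArg List.length h)

theorem injective (hl : IsNCALabeling t heavy idf ℓ) (hid : Function.Injective idf) :
    Function.Injective ℓ := by
  intro a
  induction a using t.induction with
  | root => exact fun b hb => by_contra fun hne => hl.ne_label_root (Ne.symm hne) hb.symm
  | parent a ha ih =>
    intro b hb
    by_cases hbr : b = t.root
    · exact absurd (hbr ▸ hb) (hl.ne_label_root ha)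
    rcases hl.heavy_or_light ha with ⟨hha, Qa, ya, na, hpa, ha'⟩ | ⟨-, ha'⟩ <;>
      rcases hl.heavy_or_light hbr with ⟨hhb, Qb, yb, nb, hpb, hb'⟩ | ⟨-, hb'⟩ <;>
      rw [ha', hb'] at hb <;> simp only [List.append_singleton_inj, Prod.mk.injEq] at hb
    · obtain ⟨rfl, rfl, hn⟩ := hb
      have hp : t.parent a = t.parent b := ih (by rw [hpa, hpb, Nat.succ_inj.mp hn])
      rw [← hha, ← hhb, hp]
    · exact absurd hb.2.2 (Nat.succ_ne_zero _)
    · exact absurd hb.2.2.symm (Nat.succ_ne_zero _)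
    · exact hid hb.2.1

theorem anc_iff_labelLE (hl : IsNCALabeling t heavy idf ℓ) (hid : Function.Injective idf)
    {a v : V} : t.Anc a v ↔ LabelLE (ℓ a) (ℓ v) := by
  refine ⟨hl.labelLE_of_anc, fun h => ?_⟩
  obtain ⟨c, hc, hca⟩ := hl.exists_anc_of_labelLE h
  exact hl.injective hid hca ▸ hc

theorem exists_isNca (hl : IsNCALabeling t heavy idf ℓ) (hid : Function.Injective idf)
    {u v : V} {C : List (ℕ × ℕ)} (hu : LabelLE C (ℓ u)) (hv : LabelLE C (ℓ v))
    (hC : ∀ b, LabelLE (ℓ b) (ℓ u) → LabelLE (ℓ b) (ℓ v) → LabelLE (ℓ b) C) :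
    ∃ a, IsNca t a u v ∧ ℓ a = C := by
  obtain ⟨a, hau, rfl⟩ := hl.exists_anc_of_labelLE hu
  simp only [IsNca, hl.anc_iff_labelLE hid]
  exact ⟨a, ⟨hl.labelLE_of_anc hau, hv, hC⟩, rfl⟩

end IsNCALabeling

theorem nca_from_labels_general
    (t : ParentTree V) (heavy : V → V) (idf : V → ℕ) (ℓ : V → List (ℕ × ℕ))
    (hid : Function.Injective idf)
    (hl : IsNCALabeling t heavy idf ℓ)
    (u v : V) (L : List (ℕ × ℕ)) (a₀ a₁ b₀ b₁ : ℕ) (lu lv : List (ℕ × ℕ))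
    (hu : ℓ u = L ++ (a₀, a₁) :: lu) (hv : ℓ v = L ++ (b₀, b₁) :: lv)
    (hdiff : (a₀, a₁) ≠ (b₀, b₁)) :
    (a₀ = b₀ → ∃ a, IsNca t a u v ∧ ℓ a = L ++ [(a₀, min a₁ b₁)]) ∧
    (a₀ ≠ b₀ → ∃ a, IsNca t a u v ∧ ℓ a = L) := by
  have lower_bounds {A} (hAu : LabelLE A (ℓ u)) (hAv : LabelLE A (ℓ v)) :=
    LabelLE.of_append_cons (hu ▸ hAu) (hv ▸ hAv) hdiff
  constructor
  · rintro rfl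
    refine hl.exists_isNca hid ⟨L, a₀, _, a₁, lu, min_le_left _ _, rfl, hu⟩
      ⟨L, a₀, _, b₁, lv, min_le_right _ _, rfl, hv⟩ fun b hbu hbv => ?_
    rcases lower_bounds hbu hbv with hbL | ⟨m, hb, -, hma, hmb⟩
    · exact hbL.append_right _
    · exact ⟨L, a₀, m, _, [], le_min hma hmb, hb, rfl⟩
  · intro hab
    have hL : L ≠ [] := by
      rintro rfl
      rcases lower_bounds (hl.labelLE_of_anc (t.reaches_root u))
          (hl.labelLE_of_anc (t.reaches_root v)) with h | ⟨-, -, h, -⟩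
      · exact LabelLE.not_nil h
      · exact hab h
    refine hl.exists_isNca hid (hu ▸ LabelLE.append_of_ne_nil hL _)
      (hv ▸ LabelLE.append_of_ne_nil hL _) fun b hbu hbv => ?_
    rcases lower_bounds hbu hbv with hbL | ⟨-, -, h, -⟩
    · exact hbL
    · exact absurd h hab

/-- In the heavy-path NCA labeling, the nearest common ancestor of two nodes
`u` and `v` is determined by their labels alone: writing
`ℓ u = L ++ (a₀,a₁) :: lu` and `ℓ v = L ++ (b₀,b₁) :: lv` where `L` is the
longest common prefix of whole pairs (so `(a₀,a₁) ≠ (b₀,b₁)`), the nearest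
common ancestor is the node with label `L ++ [(a₀, min a₁ b₁)]` if `a₀ = b₀`,
and otherwise the node whose label is `L`. -/
theorem nca_from_labels [Fintype V]
    (t : ParentTree V) (heavy : V → V) (idf : V → ℕ) (ℓ : V → List (ℕ × ℕ))
    (hheavy : HeavyValid t heavy) (hid : Function.Injective idf)
    (hl : IsNCALabeling t heavy idf ℓ)
    (u v : V) (L : List (ℕ × ℕ)) (a₀ a₁ b₀ b₁ : ℕ) (lu lv : List (ℕ × ℕ))
    (hu : ℓ u = L ++ (a₀, a₁) :: lu) (hv : ℓ v = L ++ (b₀, b₁) :: lv)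
    (hdiff : (a₀, a₁) ≠ (b₀, b₁)) :
    (a₀ = b₀ → ∃ a, IsNca t a u v ∧ ℓ a = L ++ [(a₀, min a₁ b₁)]) ∧
    (a₀ ≠ b₀ → ∃ a, IsNca t a u v ∧ ℓ a = L) :=
  nca_from_labels_general t heavy idf ℓ hid hl u v L a₀ a₁ b₀ b₁ lu lv hu hv hdiff
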